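/- arXiv:1803.05786 — 6 statements merged into one kernel-verified Lean document; each statement's English description precedes it below -/
import Mathlib

section
/- Let A be a commutative ring, let p ∈ A, and let ξ ∈ A be a non-zero-divisor such that (ξ) ∩ (p) = (pξ) as ideals of A. Then for every integer r ≥ 1 one has (ξ^r) ∩ (p) = (p ξ^r). -/
/-- If `ξ` is a non-zero-divisor in a commutative ring `A` and
`(ξ) ∩ (p) = (pξ)`, then `(ξ^r) ∩ (p) = (p ξ^r)` for every `r ≥ 1`. -/
theorem stmt_0 {A : Type*} [CommRing A] (p ξ : A)
    (hξ : ξ ∈ nonZeroDivisors A)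
    (h : Ideal.span {ξ} ⊓ Ideal.span {p} = Ideal.span {p * ξ}) :
    ∀ r : ℕ, 1 ≤ r →
      Ideal.span {ξ ^ r} ⊓ Ideal.span {p} = Ideal.span {p * ξ ^ r} := by
  intro r hr
  induction r with
  | zero => omega
  | succ n ih =>
    rcases Nat.eq_or_lt_of_le hr with h1 | h1
    · simpa [← h1] using h
    · have hn : 1 ≤ n := by omega
      have ihn := ih hn
      apply le_antisymm
      · intro x hx
        obtain ⟨hx1, hx2⟩ := Ideal.mem_inf.mp hx
        rw [Ideal.mem_span_singleton] at hx1 hx2 ⊢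
        obtain ⟨a, ha⟩ := hx1
        -- x ∈ (ξ^n) ∩ (p) = (p ξ^n)
        have hmem : x ∈ Ideal.span {p * ξ ^ n} := by
          rw [← ihn, Ideal.mem_inf, Ideal.mem_span_singleton,
            Ideal.mem_span_singleton]
          exact ⟨⟨a * ξ, by rw [ha, pow_succ]; ring⟩, hx2⟩
        rw [Ideal.mem_span_singleton] at hmem
        obtain ⟨c, hc⟩ := hmem
        -- ξ^(n+1) * a = p * ξ^n * c, cancel ξ^n
        have hξn : ξ ^ n ∈ nonZeroDivisors A := pow_mem hξ n
        have heq : ξ ^ n * (ξ * a) = ξ ^ n * (p * c) := by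
          have := ha.symm.trans hc
          rw [pow_succ] at this
          linear_combination this
        have h2 : ξ * a = p * c := (mul_cancel_left_mem_nonZeroDivisors hξn).mp heq
        -- ξ * a ∈ (ξ) ∩ (p) = (pξ)
        have hmem2 : ξ * a ∈ Ideal.span {p * ξ} := by
          rw [← h, Ideal.mem_inf, Ideal.mem_span_singleton,
            Ideal.mem_span_singleton]
          exact ⟨⟨a, rfl⟩, ⟨c, h2⟩⟩
        rw [Ideal.mem_span_singleton] at hmem2
        obtain ⟨d, hd⟩ := hmem2
        -- cancel ξ : a = p * d
        have h3 : ξ * a = ξ * (p * d) := by linear_combination hd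
        have h4 : a = p * d := (mul_cancel_left_mem_nonZeroDivisors hξ).mp h3
        exact ⟨d, by rw [ha, h4]; ring⟩
      · rw [Ideal.span_singleton_le_iff_mem, Ideal.mem_inf,
          Ideal.mem_span_singleton, Ideal.mem_span_singleton]
        exact ⟨⟨p, mul_comm _ _⟩, ⟨ξ ^ (n + 1), rfl⟩⟩
end

section
/- Let A → B be an isometric morphism of nonarchimedean Banach rings such that the quotient map π : B → B/A admits an isometric A-linear section s : B/A → B. Then for all b₁, b₂ ∈ B one has |π(b₁ b₂)| ≤ max{ |b₂| |π(b₁)|, |b₁| |π(b₂)| }. -/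
/-!
Split `b₁ = a + s (π b₁)` with `a := b₁ - s (π b₁) ∈ A`; since `s` is an isometric section, the
ultrametric inequality gives `‖a‖ ≤ ‖b₁‖`. By `A`-linearity and isometry of `s`,
`‖π (a b₂)‖ = ‖a · s (π b₂)‖ ≤ ‖b₁‖ ‖π b₂‖`, while `‖π (s (π b₁) b₂)‖ ≤ ‖π b₁‖ ‖b₂‖` trivially.
The quotient seminorm is again ultrametric, so `‖π (b₁ b₂)‖` is bounded by the larger of the two.
-/

open QuotientAddGroup

instance QuotientAddGroup.isUltrametricDist {M : Type*} [SeminormedAddCommGroup M]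
    [IsUltrametricDist M] (S : AddSubgroup M) : IsUltrametricDist (M ⧸ S) := by
  refine IsUltrametricDist.isUltrametricDist_of_forall_norm_add_le_max_norm fun x y => ?_
  refine le_of_forall_pos_lt_add fun ε hε => ?_
  obtain ⟨m, rfl, hm⟩ := exists_norm_mk_lt x hε
  obtain ⟨n, rfl, hn⟩ := exists_norm_mk_lt y hε
  calc ‖(m : M ⧸ S) + n‖ ≤ ‖m + n‖ := by rw [← mk_add]; exact norm_mk_le_norm
    _ ≤ max ‖m‖ ‖n‖ := IsUltrametricDist.norm_add_le_max m n
    _ < max ‖(m : M ⧸ S)‖ ‖(n : M ⧸ S)‖ + ε := by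
      rw [← max_add_add_right]; exact max_lt_max hm hn

theorem sub_section_mk_mem {B : Type*} [AddCommGroup B] {A : AddSubgroup B} (s : B ⧸ A → B)
    (hsec : ∀ q : B ⧸ A, (s q : B ⧸ A) = q) (b : B) : b - s b ∈ A := by
  rw [← eq_zero_iff, mk_sub, hsec, sub_self]

theorem norm_sub_section_mk_le {B : Type*} [SeminormedAddCommGroup B] [IsUltrametricDist B]
    {A : AddSubgroup B} (s : B ⧸ A → B) (hiso : ∀ q : B ⧸ A, ‖s q‖ = ‖q‖) (b : B) :
    ‖b - s b‖ ≤ ‖b‖ :=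
  calc ‖b - s b‖ ≤ max ‖b‖ ‖-s b‖ := sub_eq_add_neg b (s b) ▸ IsUltrametricDist.norm_add_le_max _ _
    _ ≤ ‖b‖ := max_le le_rfl (by rw [norm_neg, hiso]; exact norm_mk_le_norm)

theorem norm_mk_mul_le_of_mem {B : Type*} [SeminormedCommRing B] {A : Subring B}
    (s : B ⧸ A.toAddSubgroup → B)
    (hlin : ∀ a ∈ A, ∀ b : B, s (mk (a * b)) = a * s (mk b))
    (hiso : ∀ q : B ⧸ A.toAddSubgroup, ‖s q‖ = ‖q‖) {a : B} (ha : a ∈ A) (b : B) :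
    ‖(mk (a * b) : B ⧸ A.toAddSubgroup)‖ ≤ ‖a‖ * ‖(mk b : B ⧸ A.toAddSubgroup)‖ := by
  rw [← hiso, hlin a ha, ← hiso (mk b)]
  exact norm_mul_le _ _

theorem stmt_5_general {B : Type*} [NormedCommRing B]
    (hna : ∀ x y : B, ‖x + y‖ ≤ max ‖x‖ ‖y‖)
    (A : Subring B)
    (s : B ⧸ A.toAddSubgroup → B)
    (hlin : ∀ a ∈ A, ∀ b : B,
      s (QuotientAddGroup.mk (a * b)) = a * s (QuotientAddGroup.mk b))
    (hsec : ∀ q : B ⧸ A.toAddSubgroup,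
      (QuotientAddGroup.mk (s q) : B ⧸ A.toAddSubgroup) = q)
    (hiso : ∀ q : B ⧸ A.toAddSubgroup, ‖s q‖ = ‖q‖) :
    ∀ b₁ b₂ : B,
      ‖(QuotientAddGroup.mk (b₁ * b₂) : B ⧸ A.toAddSubgroup)‖ ≤
        max (‖b₂‖ * ‖(QuotientAddGroup.mk b₁ : B ⧸ A.toAddSubgroup)‖)
            (‖b₁‖ * ‖(QuotientAddGroup.mk b₂ : B ⧸ A.toAddSubgroup)‖) := by
  intro b₁ b₂
  have := IsUltrametricDist.isUltrametricDist_of_forall_norm_add_le_max_norm hna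
  set q₁ : B ⧸ A.toAddSubgroup := mk b₁
  set a := b₁ - s q₁
  have hsplit : b₁ * b₂ = a * b₂ + s q₁ * b₂ := by ring
  have h_mem : ‖(mk (a * b₂) : B ⧸ A.toAddSubgroup)‖ ≤ ‖b₁‖ * ‖(mk b₂ : B ⧸ A.toAddSubgroup)‖ :=
    (norm_mk_mul_le_of_mem s hlin hiso (sub_section_mk_mem s hsec b₁) b₂).trans
      (mul_le_mul_of_nonneg_right (norm_sub_section_mk_le s hiso b₁) (norm_nonneg _))
  have h_sec : ‖(mk (s q₁ * b₂) : B ⧸ A.toAddSubgroup)‖ ≤ ‖b₂‖ * ‖q₁‖ :=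
    calc _ ≤ ‖s q₁ * b₂‖ := norm_mk_le_norm
      _ ≤ ‖s q₁‖ * ‖b₂‖ := norm_mul_le _ _
      _ = ‖b₂‖ * ‖q₁‖ := by rw [hiso, mul_comm]
  calc ‖(mk (b₁ * b₂) : B ⧸ A.toAddSubgroup)‖
      = ‖(mk (a * b₂) : B ⧸ A.toAddSubgroup) + mk (s q₁ * b₂)‖ := by rw [hsplit, mk_add]
    _ ≤ max ‖(mk (a * b₂) : B ⧸ A.toAddSubgroup)‖ ‖(mk (s q₁ * b₂) : B ⧸ A.toAddSubgroup)‖ :=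
      IsUltrametricDist.norm_add_le_max _ _
    _ ≤ _ := (max_le_max h_mem h_sec).trans_eq (max_comm _ _)

/-- Let `A → B` be an isometric morphism of nonarchimedean Banach rings (realized by a closed
subring `A` of `B`) such that the quotient map `π : B → B/A` admits an isometric `A`-linear
section `s`.  Then `‖π (b₁ b₂)‖ ≤ max (‖b₂‖ ‖π b₁‖) (‖b₁‖ ‖π b₂‖)` for all `b₁ b₂ : B`. -/
theorem stmt_5 {B : Type*} [NormedCommRing B] [CompleteSpace B]
    (hna : ∀ x y : B, ‖x + y‖ ≤ max ‖x‖ ‖y‖)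
    (A : Subring B) (hAclosed : IsClosed (A : Set B))
    (s : B ⧸ A.toAddSubgroup → B)
    (hadd : ∀ x y, s (x + y) = s x + s y)
    (hlin : ∀ a ∈ A, ∀ b : B,
      s (QuotientAddGroup.mk (a * b)) = a * s (QuotientAddGroup.mk b))
    (hsec : ∀ q : B ⧸ A.toAddSubgroup,
      (QuotientAddGroup.mk (s q) : B ⧸ A.toAddSubgroup) = q)
    (hiso : ∀ q : B ⧸ A.toAddSubgroup, ‖s q‖ = ‖q‖) :
    ∀ b₁ b₂ : B,
      ‖(QuotientAddGroup.mk (b₁ * b₂) : B ⧸ A.toAddSubgroup)‖ ≤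
        max (‖b₂‖ * ‖(QuotientAddGroup.mk b₁ : B ⧸ A.toAddSubgroup)‖)
            (‖b₁‖ * ‖(QuotientAddGroup.mk b₂ : B ⧸ A.toAddSubgroup)‖) :=
  stmt_5_general hna A s hlin hsec hiso
end

section
/- Let A be a Banach ring with a continuous action of a profinite group Γ, and let M be a Banach A-module with a semilinear Γ-action by isometries. Equip the continuous cochain complex C^•(Γ, M) with the supremum norm and assume it is uniformly strict exact with constant c. Let L = ⊕_{i=1}^{l} A e_i be a finite free Γ-module over A, equipped with the supremum norm with respect to the basis (e_i). Suppose there exists r > 1 such that |γ(e_i) − e_i| < 1/(r c) for every i and every γ ∈ Γ. Then the complex C^•(Γ, L ⊗_A M) is uniformly strict exact with the same constant c. -/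
open scoped NNReal ENNReal

/-- Inhomogeneous continuous-cochain differential for a group `Γ` acting (via `act`) on an
abelian group `N`: the usual group-cohomology differential on `C^n(Γ, N)`. -/
def cochainD {Γ N : Type*} [Group Γ] [AddCommGroup N]
    (act : Γ → N → N) (n : ℕ) (f : (Fin n → Γ) → N) :
    (Fin (n + 1) → Γ) → N :=
  fun g => act (g 0) (f fun i => g i.succ) +
    ∑ j : Fin (n + 1), ((-1 : ℤ) ^ ((j : ℕ) + 1)) • f (Fin.contractNth j (· * ·) g)

/-- The supremum norm of a cochain, valued in `ℝ≥0∞`. -/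
noncomputable def supNorm {X M : Type*} [SeminormedAddCommGroup M] (f : X → M) : ℝ≥0∞ :=
  ⨆ x, (‖f x‖₊ : ℝ≥0∞)

/-!
Write `L ⊗_A M = M^l`. The action of `Γ` on `M^l` through `L` is
`γ(w)_j = ∑_i τ_γ(i, j) γ(w_i)`; since `τ_γ` is `ε`-close to the identity matrix with
`ε = 1/(r c)`, it differs from the diagonal action by at most `ε` in operator norm, and so do
the two cochain differentials. The diagonal complex is uniformly strict exact with constant `c`
componentwise. A cocycle `u` for the twisted action is thus, up to a correction of norm
`≤ ε c ‖u‖`, a cocycle for the diagonal one, and integrating it gives `v` with `‖v‖ ≤ c ‖u‖`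
and `‖u - d v‖ ≤ ε c ‖u‖ ≤ ‖u‖ / r`. Iterating, the approximate primitives of the successive
errors form a geometric series whose sum is a primitive of `u`; by the ultrametric inequality
its norm is still `≤ c ‖u‖`.
-/

open Filter Topology

universe u v

section Differential

variable {Γ : Type u} {N : Type v} [Group Γ] [AddCommGroup N]

def AddAut.homOfAction (T : Γ → N → N) (hadd : ∀ γ x y, T γ (x + y) = T γ x + T γ y)
    (hone : ∀ x, T 1 x = x) (hmul : ∀ γ γ' x, T (γ * γ') x = T γ (T γ' x)) :
    Γ →* Multiplicative (AddAut N) where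
  toFun γ := .ofAdd
    { toFun := T γ
      invFun := T γ⁻¹
      left_inv x := by rw [← hmul, inv_mul_cancel, hone]
      right_inv x := by rw [← hmul, mul_inv_cancel, hone]
      map_add' := hadd γ }
  map_one' := AddEquiv.ext hone
  map_mul' γ γ' := AddEquiv.ext (hmul γ γ')

variable (act : Γ →* Multiplicative (AddAut N))

/-- The action transported to `ULift`s in a common universe: Mathlib's `Rep k G`, whose
inhomogeneous cochain complex provides `d ∘ d = 0`, needs `k`, `G` and the module in one
universe. -/
def uliftRepresentation :
    Representation (ULift.{max u v} ℤ) (ULift.{v} Γ) (ULift.{u} N) where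
  toFun γ :=
    { toFun x := ⟨(act γ.down).toAdd x.down⟩
      map_add' x y := congrArg ULift.up (map_add _ x.down y.down)
      map_smul' z x := congrArg ULift.up (map_zsmul (act γ.down).toAdd z.down x.down) }
  map_one' := by ext x; simp
  map_mul' γ δ := by ext x; simp

def uliftCochain {n : ℕ} (f : (Fin n → Γ) → N) : (Fin n → ULift.{v} Γ) → ULift.{u} N :=
  fun g => ⟨f fun i => (g i).down⟩

theorem uliftCochain_cochainD (n : ℕ) (f : (Fin n → Γ) → N) :
    uliftCochain (cochainD (fun γ x => (act γ).toAdd x) n f) =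
      (inhomogeneousCochains.d (Rep.of (uliftRepresentation act)) n).hom (uliftCochain f) := by
  have hcontract (j : Fin (n + 1)) (g : Fin (n + 1) → ULift.{v} Γ) :
      (fun i => (Fin.contractNth j (· * ·) g i).down) =
        Fin.contractNth j (· * ·) fun i => (g i).down := by
    funext i; unfold Fin.contractNth; split_ifs <;> rfl
  funext g
  apply ULift.ext
  simp only [uliftCochain, cochainD, uliftRepresentation, inhomogeneousCochains.d_hom_apply,
    MonoidHom.coe_mk, OneHom.coe_mk, LinearMap.coe_mk, AddHom.coe_mk, hcontract, ULift.smul_def,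
    ULift.pow_down, ULift.neg_down, ULift.one_down, ULift.add_down, add_right_inj]
  exact (map_sum (AddEquiv.ulift : ULift.{u} N ≃+ N) _ _).symm

theorem cochainD_cochainD (n : ℕ) (f : (Fin n → Γ) → N) :
    cochainD (fun γ x => (act γ).toAdd x) (n + 1) (cochainD (fun γ x => (act γ).toAdd x) n f) =
      0 := by
  have h := congrArg (fun φ => φ.hom (uliftCochain f))
    (groupCohomology.inhomogeneousCochains.d_comp_d n (Rep.of (uliftRepresentation act)))
  simp only [ModuleCat.hom_comp, LinearMap.coe_comp, Function.comp_apply,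
    ModuleCat.hom_zero, LinearMap.zero_apply] at h
  rw [← uliftCochain_cochainD, ← uliftCochain_cochainD] at h
  funext g
  exact congrArg ULift.down (congrFun h fun i => ⟨g i⟩)

theorem cochainD_sub (n : ℕ) (f f' : (Fin n → Γ) → N) :
    cochainD (fun γ x => (act γ).toAdd x) n (f - f') =
      cochainD (fun γ x => (act γ).toAdd x) n f - cochainD (fun γ x => (act γ).toAdd x) n f' := by
  funext g
  simp only [cochainD, Pi.sub_apply, map_sub, smul_sub, Finset.sum_sub_distrib]
  abel

end Differential

/-- Degree `0` asks for injectivity of `d⁰`, as there are no cochains in degree `-1`. -/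
def IsUniformlyStrictExact {Γ N : Type*} [Group Γ] [TopologicalSpace Γ] [NormedAddCommGroup N]
    (act : Γ → N → N) (c : ℝ≥0) : Prop :=
  (∀ f : (Fin 0 → Γ) → N, Continuous f → cochainD act 0 f = 0 → f = 0) ∧
    ∀ (n : ℕ) (f : (Fin (n + 1) → Γ) → N), Continuous f → cochainD act (n + 1) f = 0 →
      ∃ g : (Fin n → Γ) → N, Continuous g ∧ cochainD act n g = f ∧
        supNorm g ≤ (c : ℝ≥0∞) * supNorm f

section SupNorm

variable {X N : Type*} [SeminormedAddCommGroup N]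

theorem supNorm_le_iff {f : X → N} {C : ℝ≥0∞} :
    supNorm f ≤ C ↔ ∀ x, (‖f x‖₊ : ℝ≥0∞) ≤ C :=
  iSup_le_iff

theorem nnnorm_le_supNorm (f : X → N) (x : X) : (‖f x‖₊ : ℝ≥0∞) ≤ supNorm f :=
  le_iSup (fun x => (‖f x‖₊ : ℝ≥0∞)) x

theorem norm_le_of_supNorm_le {f : X → N} {C : ℝ≥0} (h : supNorm f ≤ C) (x : X) :
    ‖f x‖ ≤ C := by
  exact_mod_cast (nnnorm_le_supNorm f x).trans h

theorem supNorm_add_le_max [IsUltrametricDist N] (f g : X → N) :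
    supNorm (f + g) ≤ max (supNorm f) (supNorm g) :=
  supNorm_le_iff.2 fun x => by
    have := IsUltrametricDist.nnnorm_add_le_max (f x) (g x)
    calc (‖(f + g) x‖₊ : ℝ≥0∞) ≤ max (‖f x‖₊ : ℝ≥0∞) ‖g x‖₊ := by exact_mod_cast this
      _ ≤ _ := max_le_max (nnnorm_le_supNorm f x) (nnnorm_le_supNorm g x)

theorem supNorm_sub_le_max [IsUltrametricDist N] (f g : X → N) :
    supNorm (f - g) ≤ max (supNorm f) (supNorm g) := by
  simpa [sub_eq_add_neg, supNorm] using supNorm_add_le_max f (-g)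

theorem supNorm_ne_top [TopologicalSpace X] [CompactSpace X] {f : X → N} (hf : Continuous f) :
    supNorm f ≠ ∞ :=
  ne_top_of_le_ne_top (ENNReal.coe_ne_top (r := ‖(⟨f, hf⟩ : C(X, N))‖₊)) <|
    supNorm_le_iff.2 fun x => ENNReal.coe_le_coe.2 (ContinuousMap.norm_coe_le_norm ⟨f, hf⟩ x)

theorem supNorm_pi_le_iff {ι : Type*} [Fintype ι] {u : X → ι → N} {C : ℝ≥0∞} :
    supNorm u ≤ C ↔ ∀ j, supNorm (fun x => u x j) ≤ C := by
  simp only [supNorm_le_iff, Pi.nnnorm_def, ENNReal.coe_finset_sup, Finset.sup_le_iff,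
    Finset.mem_univ, true_implies]
  exact forall_comm

end SupNorm

theorem supNorm_eq_zero {X N : Type*} [NormedAddCommGroup N] {f : X → N} :
    supNorm f = 0 ↔ f = 0 := by
  simp [supNorm, funext_iff]

section Continuity

variable {Γ N : Type*} [Group Γ] [AddCommGroup N] [TopologicalSpace N] [IsTopologicalAddGroup N]

theorem hasSum_cochainD (act : Γ →* Multiplicative (AddAut N))
    (hact : ∀ γ, Continuous (act γ).toAdd) {n : ℕ} {G : ℕ → (Fin n → Γ) → N}
    {g : (Fin n → Γ) → N} (hG : ∀ x, HasSum (fun m => G m x) (g x)) (x : Fin (n + 1) → Γ) :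
    HasSum (fun m => cochainD (fun γ y => (act γ).toAdd y) n (G m) x)
      (cochainD (fun γ y => (act γ).toAdd y) n g x) :=
  ((hG _).map (act (x 0)).toAdd (hact _)).add (hasSum_sum fun _ _ => (hG _).const_smul _)

variable [TopologicalSpace Γ] [IsTopologicalGroup Γ]

theorem continuous_contractNth {n : ℕ} (j : Fin (n + 1)) :
    Continuous fun g : Fin (n + 1) → Γ => Fin.contractNth j (· * ·) g := by
  refine continuous_pi fun i => ?_
  unfold Fin.contractNth
  split_ifs
  · exact continuous_apply _
  · exact (continuous_apply _).mul (continuous_apply _)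
  · exact continuous_apply _

theorem continuous_cochainD {act : Γ → N → N} (hact : Continuous fun p : Γ × N => act p.1 p.2)
    {n : ℕ} {f : (Fin n → Γ) → N} (hf : Continuous f) : Continuous (cochainD act n f) := by
  unfold cochainD
  exact (hact.comp ((continuous_apply 0).prodMk
    (hf.comp (continuous_pi fun _ => continuous_apply _)))).add
    (continuous_finsetSum _ fun j _ => (hf.comp (continuous_contractNth j)).zsmul _)

end Continuity

section Iteration

variable {Γ N : Type*} [Group Γ] [TopologicalSpace Γ]
  [NormedAddCommGroup N] [IsUltrametricDist N] [CompleteSpace N]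
  (act : Γ →* Multiplicative (AddAut N)) (hact : Continuous fun p : Γ × N => (act p.1).toAdd p.2)
include hact

theorem exists_cochainD_eq_of_telescoping {n : ℕ} {C q : ℝ≥0} (hq : q < 1)
    {G : ℕ → (Fin n → Γ) → N} {S : ℕ → (Fin (n + 1) → Γ) → N} (hG_cont : ∀ m, Continuous (G m))
    (hG_norm : ∀ m, supNorm (G m) ≤ (C * q ^ m : ℝ≥0))
    (hS : ∀ m, S m - S (m + 1) = cochainD (fun γ x => (act γ).toAdd x) n (G m))
    (hS_lim : ∀ x, Tendsto (fun m => S m x) atTop (𝓝 0)) :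
    ∃ g, Continuous g ∧ cochainD (fun γ x => (act γ).toAdd x) n g = S 0 ∧ supNorm g ≤ C := by
  have hG (m : ℕ) (x : Fin n → Γ) : ‖G m x‖ ≤ C * q ^ m := by
    exact_mod_cast norm_le_of_supNorm_le (hG_norm m) x
  have hsum : Summable fun m : ℕ => (C * q ^ m : ℝ) :=
    (summable_geometric_of_lt_one (by positivity) (by exact_mod_cast hq)).mul_left _
  let g x := ∑' m, G m x
  have hg (x : Fin n → Γ) : HasSum (fun m => G m x) (g x) :=
    (hsum.of_norm_bounded fun m => hG m x).hasSum
  refine ⟨g, continuous_tsum hG_cont hsum hG, funext fun x => ?_, ?_⟩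
  · have hpartial (m : ℕ) : ∑ k ∈ Finset.range m,
        cochainD (fun γ x => (act γ).toAdd x) n (G k) x = S 0 x - S m x := by
      simp only [← hS, Pi.sub_apply, Finset.sum_range_sub']
    refine tendsto_nhds_unique (hasSum_cochainD act (fun γ => ?_) hg x).tendsto_sum_nat ?_
    · exact hact.comp (continuous_const.prodMk continuous_id)
    · simpa [hpartial] using tendsto_const_nhds.sub (hS_lim x)
  · refine supNorm_le_iff.2 fun x => ENNReal.coe_le_coe.2 ?_
    have : ‖g x‖ ≤ C := IsUltrametricDist.norm_tsum_le_of_forall_le fun m =>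
      (hG m x).trans (mul_le_of_le_one_right (by positivity)
        (pow_le_one₀ (by positivity) (by exact_mod_cast hq.le)))
    exact_mod_cast this

variable [IsTopologicalGroup Γ] [CompactSpace Γ]

/-- The approximate primitives of the successive errors form a geometric series. -/
theorem exists_cochainD_eq_of_forall_approx {n : ℕ} {c q : ℝ≥0} (hq : q < 1)
    (happrox : ∀ u : (Fin (n + 1) → Γ) → N, Continuous u →
      cochainD (fun γ x => (act γ).toAdd x) (n + 1) u = 0 →
      ∃ v, Continuous v ∧ supNorm v ≤ c * supNorm u ∧
        supNorm (u - cochainD (fun γ x => (act γ).toAdd x) n v) ≤ q * supNorm u)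
    {f : (Fin (n + 1) → Γ) → N} (hf : Continuous f)
    (hdf : cochainD (fun γ x => (act γ).toAdd x) (n + 1) f = 0) :
    ∃ g, Continuous g ∧ cochainD (fun γ x => (act γ).toAdd x) n g = f ∧
      supNorm g ≤ c * supNorm f := by
  let Z := {u : (Fin (n + 1) → Γ) → N //
    Continuous u ∧ cochainD (fun γ x => (act γ).toAdd x) (n + 1) u = 0}
  choose V hV_cont hV_norm hV_approx using fun u : Z => happrox u.1 u.2.1 u.2.2
  let next (u : Z) : Z := ⟨u.1 - cochainD (fun γ x => (act γ).toAdd x) n (V u),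
    u.2.1.sub (continuous_cochainD hact (hV_cont u)),
    by rw [cochainD_sub, u.2.2, cochainD_cochainD, sub_zero]⟩
  let S (m : ℕ) : Z := next^[m] ⟨f, hf, hdf⟩
  have hS_succ (m : ℕ) : S (m + 1) = next (S m) := Function.iterate_succ_apply' ..
  set F := (supNorm f).toNNReal
  have hF : supNorm f = F := (ENNReal.coe_toNNReal (supNorm_ne_top hf)).symm
  have hS_norm (m : ℕ) : supNorm (S m).1 ≤ (F * q ^ m : ℝ≥0) := by
    induction m with
    | zero => simp [S, hF]
    | succ m ih =>
      rw [hS_succ]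
      calc supNorm (next (S m)).1 ≤ q * supNorm (S m).1 := hV_approx _
        _ ≤ q * (F * q ^ m : ℝ≥0) := by gcongr
        _ = (F * q ^ (m + 1) : ℝ≥0) := by push_cast; ring
  obtain ⟨g, hg_cont, hdg, hg_norm⟩ := exists_cochainD_eq_of_telescoping act hact hq
    (C := c * F) (G := fun m => V (S m)) (S := fun m => (S m).1) (fun m => hV_cont _)
    (fun m => (hV_norm _).trans <| (mul_le_mul_right (hS_norm m) _).trans_eq (by push_cast; ring))
    (fun m => by simp [hS_succ, next])
    (fun x => squeeze_zero_norm (fun m => norm_le_of_supNorm_le (hS_norm m) x) <| by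
      simpa using (tendsto_pow_atTop_nhds_zero_of_lt_one (by positivity)
        (show (q : ℝ) < 1 by exact_mod_cast hq)).const_mul (F : ℝ))
  exact ⟨g, hg_cont, hdg, hg_norm.trans_eq (by rw [hF, ENNReal.coe_mul])⟩

end Iteration

section Perturbation

variable {Γ N : Type*} [Group Γ] [NormedAddCommGroup N]
  (act₀ act : Γ →* Multiplicative (AddAut N)) {ε : ℝ≥0}
  (hpert : ∀ γ w, ‖(act₀ γ).toAdd w - (act γ).toAdd w‖ ≤ ε * ‖w‖)
include hpert

theorem supNorm_cochainD_sub_cochainD_le {n : ℕ} (u : (Fin n → Γ) → N) :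
    supNorm (cochainD (fun γ x => (act₀ γ).toAdd x) n u -
      cochainD (fun γ x => (act γ).toAdd x) n u) ≤ ε * supNorm u := by
  refine supNorm_le_iff.2 fun x => ?_
  have : ‖(act₀ (x 0)).toAdd (u fun i => x i.succ) - (act (x 0)).toAdd (u fun i => x i.succ)‖₊ ≤
      ε * ‖u fun i => x i.succ‖₊ := by exact_mod_cast hpert _ _
  simpa [cochainD] using (ENNReal.coe_le_coe.2 this).trans
    (by rw [ENNReal.coe_mul]; gcongr; exact nnnorm_le_supNorm u _)

variable [TopologicalSpace Γ] [IsTopologicalGroup Γ] {c : ℝ≥0}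
  (h₀ : IsUniformlyStrictExact (fun γ x => (act₀ γ).toAdd x) c)
  (h₀_cont : Continuous fun p : Γ × N => (act₀ p.1).toAdd p.2)
include h₀ h₀_cont

/-- The correction `h` is a `c`-bounded `act₀`-primitive of `d₀ u = d₀ u - d u`. -/
theorem exists_cochainD_sub_eq_zero_of_perturbation {n : ℕ} {u : (Fin n → Γ) → N}
    (hu : Continuous u) (hdu : cochainD (fun γ x => (act γ).toAdd x) n u = 0) :
    ∃ h, Continuous h ∧ cochainD (fun γ x => (act₀ γ).toAdd x) n (u - h) = 0 ∧
      supNorm h ≤ (ε * c : ℝ≥0) * supNorm u := by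
  obtain ⟨h, hh_cont, hdh, hh_norm⟩ := h₀.2 n _ (continuous_cochainD h₀_cont hu)
    (cochainD_cochainD act₀ n u)
  refine ⟨h, hh_cont, by rw [cochainD_sub, hdh, sub_self], hh_norm.trans ?_⟩
  calc (c : ℝ≥0∞) * supNorm (cochainD (fun γ x => (act₀ γ).toAdd x) n u)
      = c * supNorm (cochainD (fun γ x => (act₀ γ).toAdd x) n u -
          cochainD (fun γ x => (act γ).toAdd x) n u) := by rw [hdu, sub_zero]
    _ ≤ c * (ε * supNorm u) := by gcongr; exact supNorm_cochainD_sub_cochainD_le act₀ act hpert u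
    _ = (ε * c : ℝ≥0) * supNorm u := by push_cast; ring

theorem eq_zero_of_perturbation [CompactSpace Γ] (hεc : ε * c < 1) {u : (Fin 0 → Γ) → N}
    (hu : Continuous u) (hdu : cochainD (fun γ x => (act γ).toAdd x) 0 u = 0) : u = 0 := by
  obtain ⟨h, hh_cont, hdh, hh_norm⟩ :=
    exists_cochainD_sub_eq_zero_of_perturbation act₀ act hpert h₀ h₀_cont hu hdu
  obtain rfl : u = h := sub_eq_zero.1 (h₀.1 _ (hu.sub hh_cont) hdh)
  refine supNorm_eq_zero.1 (by_contra fun hne => hh_norm.not_gt ?_)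
  have := ENNReal.mul_lt_mul_right hne (supNorm_ne_top hu)
    (show ((ε * c : ℝ≥0) : ℝ≥0∞) < 1 by exact_mod_cast hεc)
  rwa [mul_one, mul_comm] at this

variable [IsUltrametricDist N]

theorem exists_approx_of_perturbation (hεc : ε * c < 1) {n : ℕ}
    {u : (Fin (n + 1) → Γ) → N} (hu : Continuous u)
    (hdu : cochainD (fun γ x => (act γ).toAdd x) (n + 1) u = 0) :
    ∃ v, Continuous v ∧ supNorm v ≤ c * supNorm u ∧
      supNorm (u - cochainD (fun γ x => (act γ).toAdd x) n v) ≤ (ε * c : ℝ≥0) * supNorm u := by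
  obtain ⟨h, hh_cont, hdh, hh_norm⟩ :=
    exists_cochainD_sub_eq_zero_of_perturbation act₀ act hpert h₀ h₀_cont hu hdu
  have hh_le : supNorm h ≤ supNorm u :=
    hh_norm.trans (mul_le_of_le_one_left' (by exact_mod_cast hεc.le))
  have huh_norm : supNorm (u - h) ≤ supNorm u :=
    (supNorm_sub_le_max u h).trans (max_le le_rfl hh_le)
  obtain ⟨v, hv_cont, hdv, hv_norm⟩ := h₀.2 n _ (hu.sub hh_cont) hdh
  refine ⟨v, hv_cont, hv_norm.trans (by gcongr), ?_⟩
  have hsplit : u - cochainD (fun γ x => (act γ).toAdd x) n v = h +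
      (cochainD (fun γ x => (act₀ γ).toAdd x) n v - cochainD (fun γ x => (act γ).toAdd x) n v) := by
    rw [hdv]; abel
  rw [hsplit]
  refine (supNorm_add_le_max _ _).trans (max_le hh_norm ?_)
  calc _ ≤ ε * supNorm v := supNorm_cochainD_sub_cochainD_le act₀ act hpert v
    _ ≤ ε * (c * supNorm u) := by gcongr; exact hv_norm.trans (by gcongr)
    _ = (ε * c : ℝ≥0) * supNorm u := by push_cast; ring

variable [CompactSpace Γ] [CompleteSpace N]

theorem IsUniformlyStrictExact.of_perturbation
    (hact : Continuous fun p : Γ × N => (act p.1).toAdd p.2) (hεc : ε * c < 1) :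
    IsUniformlyStrictExact (fun γ x => (act γ).toAdd x) c :=
  ⟨fun _ hu hdu => eq_zero_of_perturbation act₀ act hpert h₀ h₀_cont hεc hu hdu,
    fun _ _ hf hdf => exists_cochainD_eq_of_forall_approx act hact hεc
      (fun _ hu hdu => exists_approx_of_perturbation act₀ act hpert h₀ h₀_cont hεc hu hdu) hf hdf⟩

end Perturbation

theorem cochainD_pi_apply {Γ N ι : Type*} [Group Γ] [AddCommGroup N] (act : Γ → N → N) {n : ℕ}
    (u : (Fin n → Γ) → ι → N) (x : Fin (n + 1) → Γ) (j : ι) :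
    cochainD (fun γ (w : ι → N) j => act γ (w j)) n u x j =
      cochainD act n (fun y => u y j) x := by
  simp [cochainD, Finset.sum_apply]

theorem IsUniformlyStrictExact.pi {Γ N ι : Type*} [Group Γ] [TopologicalSpace Γ]
    [NormedAddCommGroup N] [Fintype ι] {act : Γ → N → N} {c : ℝ≥0}
    (h : IsUniformlyStrictExact act c) :
    IsUniformlyStrictExact (fun γ (w : ι → N) j => act γ (w j)) c := by
  have hcomp {m : ℕ} {u : (Fin m → Γ) → ι → N}
      (hdu : cochainD (fun γ (w : ι → N) j => act γ (w j)) m u = 0) (j : ι) :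
      cochainD act m (fun y => u y j) = 0 := by
    funext x; rw [← cochainD_pi_apply, hdu]; rfl
  refine ⟨fun u hu hdu => funext fun y => funext fun j => ?_, fun n u hu hdu => ?_⟩
  · exact congrFun (h.1 _ (continuous_pi_iff.1 hu j) (hcomp hdu j)) y
  · choose g hg_cont hdg hg_norm using fun j => h.2 n _ (continuous_pi_iff.1 hu j) (hcomp hdu j)
    refine ⟨fun y j => g j y, continuous_pi hg_cont, funext fun x => funext fun j => ?_,
      supNorm_pi_le_iff.2 fun j => (hg_norm j).trans ?_⟩
    · rw [cochainD_pi_apply]; exact congrFun (hdg j) x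
    · gcongr; exact supNorm_pi_le_iff.1 le_rfl j

section Twist

variable {Γ A M ι : Type*} [Group Γ]

theorem norm_sub_sum_smul_le [Fintype ι] [DecidableEq ι] [NormedRing A] [NormedAddCommGroup M]
    [IsUltrametricDist M] [Module A M] [IsBoundedSMul A M] {t : ι → ι → A} {ε : ℝ≥0}
    (ht : ∀ i j, ‖t i j - if i = j then 1 else 0‖ ≤ ε) (w : ι → M) :
    ‖w - fun j => ∑ i, t i j • w i‖ ≤ ε * ‖w‖ := by
  refine (pi_norm_le_iff_of_nonneg (by positivity)).2 fun j => ?_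
  have : (w - fun j => ∑ i, t i j • w i) j = ∑ i, ((if i = j then 1 else 0) - t i j) • w i := by
    simp [sub_smul, Finset.sum_sub_distrib, ite_smul]
  rw [this]
  refine IsUltrametricDist.norm_sum_le_of_forall_le_of_nonneg (by positivity) fun i _ => ?_
  calc _ ≤ ‖(if i = j then 1 else 0) - t i j‖ * ‖w i‖ := norm_smul_le _ _
    _ ≤ ε * ‖w‖ := by
      gcongr
      · rw [norm_sub_rev]; exact ht i j
      · exact norm_le_pi_norm w i

variable [AddCommGroup M] (ρ : Γ →* Multiplicative (AddAut M))

def diagonalAction : Γ →* Multiplicative (AddAut (ι → M)) :=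
  AddAut.homOfAction (fun γ w j => (ρ γ).toAdd (w j)) (fun _ _ _ => funext fun _ => map_add _ _ _)
    (fun _ => funext fun _ => by simp) (fun _ _ _ => funext fun _ => by simp)

theorem continuous_diagonalAction [TopologicalSpace Γ] [TopologicalSpace M]
    (hρ : Continuous fun p : Γ × M => (ρ p.1).toAdd p.2) :
    Continuous fun p : Γ × (ι → M) => (diagonalAction ρ p.1).toAdd p.2 :=
  continuous_pi fun j => hρ.comp (continuous_fst.prodMk ((continuous_apply j).comp continuous_snd))

variable [Fintype ι] [CommRing A] [Module A M] {σ : Γ →* RingAut A} {τ : Γ → ι → ι → A}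
  (hτmul : ∀ (γ γ' : Γ) (i j : ι), τ (γ * γ') i j = ∑ k, σ γ (τ γ' i k) * τ γ k j)
  (hρsemi : ∀ (γ : Γ) (a : A) (m : M), (ρ γ).toAdd (a • m) = σ γ a • (ρ γ).toAdd m)

include hτmul hρsemi in
theorem sum_smul_toAdd_mul (γ γ' : Γ) (w : ι → M) (j : ι) :
    ∑ i, τ (γ * γ') i j • (ρ (γ * γ')).toAdd (w i) =
      ∑ i, τ γ i j • (ρ γ).toAdd (∑ k, τ γ' k i • (ρ γ').toAdd (w k)) := by
  have hρmul (m : M) : (ρ (γ * γ')).toAdd m = (ρ γ).toAdd ((ρ γ').toAdd m) := by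
    rw [map_mul]; rfl
  simp only [hτmul, hρmul, map_sum, hρsemi, Finset.sum_smul, Finset.smul_sum, smul_smul]
  rw [Finset.sum_comm]
  simp only [mul_comm]

variable [DecidableEq ι] (hτone : ∀ i j, τ 1 i j = if i = j then (1 : A) else 0)

def twistedAction : Γ →* Multiplicative (AddAut (ι → M)) :=
  AddAut.homOfAction (fun γ w j => ∑ i, τ γ i j • (ρ γ).toAdd (w i))
    (fun _ _ _ => funext fun _ => by simp [smul_add, Finset.sum_add_distrib])
    (fun _ => funext fun j => by simp [hτone])
    (fun γ γ' w => funext fun j => sum_smul_toAdd_mul ρ hτmul hρsemi γ γ' w j)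

theorem continuous_twistedAction [TopologicalSpace Γ] [TopologicalSpace A] [TopologicalSpace M]
    [ContinuousAdd M] [ContinuousSMul A M] (hρ : Continuous fun p : Γ × M => (ρ p.1).toAdd p.2)
    (hτ : ∀ i j, Continuous fun γ => τ γ i j) :
    Continuous fun p : Γ × (ι → M) => (twistedAction ρ hτmul hρsemi hτone p.1).toAdd p.2 :=
  continuous_pi fun j => continuous_finsetSum _ fun i _ => ((hτ i j).comp continuous_fst).smul
    (hρ.comp (continuous_fst.prodMk ((continuous_apply i).comp continuous_snd)))

end Twist

theorem stmt_6_general {Γ A M : Type*} [Group Γ] [TopologicalSpace Γ] [IsTopologicalGroup Γ]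
    [CompactSpace Γ] [NormedCommRing A]
    [NormedAddCommGroup M] [CompleteSpace M] [Module A M]
    (hnaM : ∀ x y : M, ‖x + y‖ ≤ max ‖x‖ ‖y‖)
    (hMod : ∀ (a : A) (m : M), ‖a • m‖ ≤ ‖a‖ * ‖m‖)
    (σ : Γ →* RingAut A)
    (ρ : Γ →* Multiplicative (AddAut M))
    (hρsemi : ∀ (γ : Γ) (a : A) (m : M), (ρ γ).toAdd (a • m) = σ γ a • (ρ γ).toAdd m)
    (hρiso : ∀ (γ : Γ) (m : M), ‖(ρ γ).toAdd m‖ = ‖m‖)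
    (hρcont : Continuous fun p : Γ × M => (ρ p.1).toAdd p.2)
    (c r : ℝ≥0) (hr : 1 < r)
    (hexact0 : ∀ f : (Fin 0 → Γ) → M, Continuous f →
      cochainD (fun γ m => (ρ γ).toAdd m) 0 f = 0 → f = 0)
    (hexact : ∀ (n : ℕ) (f : (Fin (n + 1) → Γ) → M), Continuous f →
      cochainD (fun γ m => (ρ γ).toAdd m) (n + 1) f = 0 →
      ∃ g : (Fin n → Γ) → M, Continuous g ∧
        cochainD (fun γ m => (ρ γ).toAdd m) n g = f ∧
        supNorm g ≤ (c : ℝ≥0∞) * supNorm f)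
    (l : ℕ) (τ : Γ → Fin l → Fin l → A)
    (hτone : ∀ i j, τ 1 i j = if i = j then (1 : A) else 0)
    (hτmul : ∀ (γ γ' : Γ) (i j : Fin l),
      τ (γ * γ') i j = ∑ k, σ γ (τ γ' i k) * τ γ k j)
    (hτcont : ∀ i j, Continuous fun γ => τ γ i j)
    (hclose : ∀ (γ : Γ) (i j : Fin l),
      ‖τ γ i j - (if i = j then (1 : A) else 0)‖₊ < 1 / (r * c)) :
    (∀ f : (Fin 0 → Γ) → (Fin l → M), Continuous f →
      cochainD (fun γ w j => ∑ i, τ γ i j • (ρ γ).toAdd (w i)) 0 f = 0 → f = 0) ∧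
    (∀ (n : ℕ) (f : (Fin (n + 1) → Γ) → (Fin l → M)), Continuous f →
      cochainD (fun γ w j => ∑ i, τ γ i j • (ρ γ).toAdd (w i)) (n + 1) f = 0 →
      ∃ g : (Fin n → Γ) → (Fin l → M), Continuous g ∧
        cochainD (fun γ w j => ∑ i, τ γ i j • (ρ γ).toAdd (w i)) n g = f ∧
        supNorm g ≤ (c : ℝ≥0∞) * supNorm f) := by
  have : IsUltrametricDist M := .isUltrametricDist_of_forall_norm_add_le_max_norm hnaM
  have : IsBoundedSMul A M := .of_norm_smul_le hMod
  have hpert (γ : Γ) (w : Fin l → M) :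
      ‖(diagonalAction ρ γ).toAdd w - (twistedAction ρ hτmul hρsemi hτone γ).toAdd w‖ ≤
        (1 / (r * c) : ℝ≥0) * ‖w‖ :=
    (norm_sub_sum_smul_le (fun i j => (hclose γ i j).le) _).trans <| by
      gcongr
      exact (pi_norm_le_iff_of_nonneg (norm_nonneg w)).2 fun i =>
        (hρiso γ (w i)).trans_le (norm_le_pi_norm w i)
  have hεc : 1 / (r * c) * c < 1 := by
    rcases eq_or_ne c 0 with rfl | hc
    · simp
    · rwa [one_div, mul_inv, mul_assoc, inv_mul_cancel₀ hc, mul_one, inv_lt_one₀ (by positivity)]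
  exact IsUniformlyStrictExact.of_perturbation _ _ hpert
    (IsUniformlyStrictExact.pi ⟨hexact0, hexact⟩) (continuous_diagonalAction ρ hρcont)
    (continuous_twistedAction ρ hτmul hρsemi hτone hρcont hτcont) hεc

/-- Let `A` be a Banach ring with a continuous isometric action of a profinite group `Γ`
(via `σ`), and `M` a nonarchimedean Banach `A`-module with a continuous semilinear isometric
`Γ`-action `ρ`.  Assume the continuous cochain complex `C^•(Γ, M)` is uniformly strict exact
with constant `c` (including vanishing of `H^0`, i.e. continuous `0`-cocycles are `0`).
Let `L = ⊕_{i=1}^{l} A e_i` be a finite free semilinear `Γ`-module over `A`, the action being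
recorded by the matrix coefficients `τ γ i j` of `γ(e_i) = ∑_j (τ γ i j) e_j`, with
`‖γ(e_i) - e_i‖ < 1/(r c)` for some `r > 1`.  Then `C^•(Γ, L ⊗_A M)` — with `L ⊗_A M ≅ M^l`
carrying the sup norm and the diagonal action — is uniformly strict exact with constant `c`. -/
theorem stmt_6 {Γ A M : Type*} [Group Γ] [TopologicalSpace Γ] [IsTopologicalGroup Γ]
    [CompactSpace Γ] [T2Space Γ] [TotallyDisconnectedSpace Γ]
    [NormedCommRing A] [CompleteSpace A]
    (hnaA : ∀ x y : A, ‖x + y‖ ≤ max ‖x‖ ‖y‖)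
    [NormedAddCommGroup M] [CompleteSpace M] [Module A M]
    (hnaM : ∀ x y : M, ‖x + y‖ ≤ max ‖x‖ ‖y‖)
    (hMod : ∀ (a : A) (m : M), ‖a • m‖ ≤ ‖a‖ * ‖m‖)
    (σ : Γ →* RingAut A)
    (hσiso : ∀ (γ : Γ) (a : A), ‖σ γ a‖ = ‖a‖)
    (hσcont : Continuous fun p : Γ × A => σ p.1 p.2)
    (ρ : Γ →* Multiplicative (AddAut M))
    (hρsemi : ∀ (γ : Γ) (a : A) (m : M), (ρ γ).toAdd (a • m) = σ γ a • (ρ γ).toAdd m)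
    (hρiso : ∀ (γ : Γ) (m : M), ‖(ρ γ).toAdd m‖ = ‖m‖)
    (hρcont : Continuous fun p : Γ × M => (ρ p.1).toAdd p.2)
    (c r : ℝ≥0) (hc : 0 < c) (hr : 1 < r)
    (hexact0 : ∀ f : (Fin 0 → Γ) → M, Continuous f →
      cochainD (fun γ m => (ρ γ).toAdd m) 0 f = 0 → f = 0)
    (hexact : ∀ (n : ℕ) (f : (Fin (n + 1) → Γ) → M), Continuous f →
      cochainD (fun γ m => (ρ γ).toAdd m) (n + 1) f = 0 →
      ∃ g : (Fin n → Γ) → M, Continuous g ∧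
        cochainD (fun γ m => (ρ γ).toAdd m) n g = f ∧
        supNorm g ≤ (c : ℝ≥0∞) * supNorm f)
    (l : ℕ) (τ : Γ → Fin l → Fin l → A)
    (hτone : ∀ i j, τ 1 i j = if i = j then (1 : A) else 0)
    (hτmul : ∀ (γ γ' : Γ) (i j : Fin l),
      τ (γ * γ') i j = ∑ k, σ γ (τ γ' i k) * τ γ k j)
    (hτcont : ∀ i j, Continuous fun γ => τ γ i j)
    (hclose : ∀ (γ : Γ) (i j : Fin l),
      ‖τ γ i j - (if i = j then (1 : A) else 0)‖₊ < 1 / (r * c)) :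
    (∀ f : (Fin 0 → Γ) → (Fin l → M), Continuous f →
      cochainD (fun γ w j => ∑ i, τ γ i j • (ρ γ).toAdd (w i)) 0 f = 0 → f = 0) ∧
    (∀ (n : ℕ) (f : (Fin (n + 1) → Γ) → (Fin l → M)), Continuous f →
      cochainD (fun γ w j => ∑ i, τ γ i j • (ρ γ).toAdd (w i)) (n + 1) f = 0 →
      ∃ g : (Fin n → Γ) → (Fin l → M), Continuous g ∧
        cochainD (fun γ w j => ∑ i, τ γ i j • (ρ γ).toAdd (w i)) n g = f ∧
        supNorm g ≤ (c : ℝ≥0∞) * supNorm f) :=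
  stmt_6_general hnaM hMod σ ρ hρsemi hρiso hρcont c r hr hexact0 hexact l τ hτone hτmul hτcont
    hclose
end

section
/- Let V be a finite-dimensional vector space over a field K and let N ∈ End(V). Suppose there exist infinitely many scalars c ∈ K such that cN is conjugate to N in GL(V). Then N is nilpotent. -/
open Polynomial Module

lemma mat_eval_charpoly {n R : Type*} [Fintype n] [DecidableEq n] [CommRing R]
    (M : Matrix n n R) (r : R) :
    (M.charpoly).eval r = (r • (1 : Matrix n n R) - M).det := by
  rw [Matrix.charpoly, ← Polynomial.coe_evalRingHom, RingHom.map_det]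
  congr 1
  ext i j
  by_cases hij : i = j <;>
    simp [Matrix.charmatrix_apply, Matrix.one_apply, hij, Matrix.diagonal, Matrix.smul_apply]

lemma lin_eval_charpoly {K V : Type*} [Field K] [AddCommGroup V] [Module K V]
    [FiniteDimensional K V] (f : Module.End K V) (r : K) :
    (f.charpoly).eval r = LinearMap.det (r • (1 : Module.End K V) - f) := by
  let b := Module.finBasis K V
  rw [← LinearMap.charpoly_toMatrix f b, mat_eval_charpoly,
    ← LinearMap.det_toMatrix b]
  congr 1
  simp [map_sub, map_smul, LinearMap.toMatrix_one]

lemma charpoly_unit_conj {K V : Type*} [Field K] [AddCommGroup V] [Module K V]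
    [FiniteDimensional K V] (g : (Module.End K V)ˣ) (N : Module.End K V) :
    ((g : Module.End K V) * N * ((g⁻¹ : (Module.End K V)ˣ) : Module.End K V)).charpoly
      = N.charpoly := by
  let e := LinearMap.GeneralLinearGroup.generalLinearEquiv K V g
  have he : e.conj N = (g : Module.End K V) * N * ((g⁻¹ : (Module.End K V)ˣ) : Module.End K V) := by
    ext x
    simp [e, LinearEquiv.conj_apply, LinearMap.GeneralLinearGroup.coeFn_generalLinearEquiv,
      Module.End.mul_apply]
    rfl
  rw [← he, LinearEquiv.charpoly_conj]

/-- Let `V` be a finite-dimensional vector space over a field `K` and `N ∈ End(V)`.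
If `c N` is conjugate to `N` (by some `g ∈ GL(V)`) for infinitely many scalars `c`,
then `N` is nilpotent. -/
theorem stmt_13 {K V : Type*} [Field K] [AddCommGroup V] [Module K V]
    [FiniteDimensional K V] (N : Module.End K V)
    (h : {c : K | ∃ g : (Module.End K V)ˣ,
      (g : Module.End K V) * N * ((g⁻¹ : (Module.End K V)ˣ) : Module.End K V)
        = c • N}.Infinite) :
    IsNilpotent N := by
  have hK : Infinite K := Set.infinite_univ_iff.mp (h.mono (Set.subset_univ _))
  set n := Module.finrank K V with hn
  set p := N.charpoly with hp
  have hdeg : p.natDegree = n := N.charpoly_natDegree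
  have hmon : p.Monic := N.charpoly_monic
  -- key: coefficients below n vanish
  have key : ∀ i, i < n → p.coeff i = 0 := by
    intro i hi
    by_contra ha
    -- pick a good scalar c
    have hfin : ({c : K | (X ^ (n - i) - 1 : K[X]).IsRoot c} ∪ {0}).Finite := by
      refine Set.Finite.union ?_ (Set.finite_singleton 0)
      apply Polynomial.finite_setOf_isRoot
      intro hzero
      have h1 : (X ^ (n - i) - 1 : K[X]).coeff 0 = 0 := by rw [hzero]; simp
      have hni : 0 < n - i := Nat.sub_pos_of_lt hi
      rw [Polynomial.coeff_sub, Polynomial.coeff_X_pow, if_neg (by omega), Polynomial.coeff_one,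
        if_pos rfl, zero_sub, neg_eq_zero] at h1
      exact one_ne_zero h1
    obtain ⟨c, hcS, hcT⟩ := (h.diff hfin).nonempty
    simp only [Set.mem_diff, Set.mem_union, Set.mem_setOf_eq, Set.mem_singleton_iff,
      not_or] at hcT
    obtain ⟨hc1, hc0⟩ := hcT
    obtain ⟨g, hg⟩ := hcS
    -- charpoly of c • N equals charpoly of N
    have hcp : (c • N).charpoly = p := by rw [← hg, charpoly_unit_conj]
    have hdet : ∀ x : K, p.eval (c * x) = c ^ n * p.eval x := by
      intro x
      have e2 := lin_eval_charpoly (c • N) (c * x)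
      rw [hcp] at e2
      rw [e2, lin_eval_charpoly N x, ← LinearMap.det_smul c (x • (1 : Module.End K V) - N)]
      congr 1
      rw [smul_sub, smul_smul]
    -- scaleRoots p c = p
    have heval : ∀ y : K, (p.scaleRoots c).eval y = p.eval y := by
      intro y
      have h1 := Polynomial.scaleRoots_eval₂_mul (p := p) (RingHom.id K) (c⁻¹ * y) c
      simp only [RingHom.id_apply] at h1
      have hy : c * (c⁻¹ * y) = y := by field_simp
      rw [hy] at h1
      show Polynomial.eval₂ (RingHom.id K) y (p.scaleRoots c) = _
      rw [h1]
      show c ^ p.natDegree * Polynomial.eval (c⁻¹ * y) p = _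
      rw [hdeg, ← hdet, hy]
    have hsr : p.scaleRoots c = p := Polynomial.funext heval
    have := congrArg (fun q => Polynomial.coeff q i) hsr
    simp only [Polynomial.coeff_scaleRoots, hdeg] at this
    have hc1' : c ^ (n - i) = 1 :=
      mul_left_cancel₀ ha (by rw [this, mul_one])
    exact hc1 (by simpa [Polynomial.IsRoot] using sub_eq_zero.mpr hc1')
  -- conclude p = X ^ n
  have hXn : p = Polynomial.X ^ n := by
    ext j
    rcases lt_trichotomy j n with hj | hj | hj
    · rw [key j hj, Polynomial.coeff_X_pow]; simp [hj.ne]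
    · subst hj
      rw [Polynomial.coeff_X_pow, if_pos rfl, ← hdeg]
      exact hmon.coeff_natDegree
    · rw [Polynomial.coeff_X_pow, if_neg hj.ne',
        Polynomial.coeff_eq_zero_of_natDegree_lt (hdeg ▸ hj)]
  rw [LinearMap.isNilpotent_iff_charpoly]
  exact hXn
end

section
/- Let B be a commutative ℚ-algebra and let R = B[[X₁, …, X_n]] be the formal power series ring. Consider the formal de Rham complex 0 → B → R →^d Ω¹ →^d Ω² → ⋯ → Ωⁿ → 0, where Ω^j = ⋀^j (⊕_{i=1}^n R dX_i) and d is the usual exterior derivative determined by d(f) = Σ_i (∂f/∂X_i) dX_i. Then this complex is exact: H⁰ = B and the cohomology vanishes in all positive degrees. -/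
/-!
The contraction `ι` with the Euler vector field `∑ₗ Xₗ ∂/∂Xₗ` satisfies the Cartan homotopy
formula `d ι + ι d = |m| + |T|` on the monomial form `X^m dX_T`. Since `d` preserves this weight
and `B` is a `ℚ`-algebra, `ι` divided by the weight is a contracting homotopy: a closed form `ω`
of positive degree is `d` of `weight⁻¹ • ι ω`, and a closed function `f` satisfies
`|m| • f_m = 0`, so all its non-constant coefficients vanish.
-/

noncomputable def psPDeriv {n : ℕ} {B : Type*} [CommRing B]
    (i : Fin n) (f : MvPowerSeries (Fin n) B) : MvPowerSeries (Fin n) B :=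
  fun m => (m i + 1 : ℕ) • MvPowerSeries.coeff (m + Finsupp.single i 1) f

/-- The de Rham differential `d : Ω^j → Ω^{j+1}` of the formal de Rham complex of
`R = B[[X_1, …, X_n]]`, where `Ω^j = ⋀^j (⊕ R dX_i)` is identified with functions on
`j`-element subsets `T` of `{1, …, n}` (their coordinates in the basis `dX_{t_1} ∧ ⋯`);
`(dω)(T) = ∑_{i ∈ T} ± ∂_i ω(T \ {i})` with the usual sign. -/
noncomputable def formD {n : ℕ} {B : Type*} [CommRing B] (j : ℕ)
    (ω : {T : Finset (Fin n) // T.card = j} → MvPowerSeries (Fin n) B) :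
    {T : Finset (Fin n) // T.card = j + 1} → MvPowerSeries (Fin n) B :=
  fun T => ∑ i ∈ T.1.attach,
    ((-1 : ℤ) ^ (T.1.filter (fun k => k < i.1)).card) •
      psPDeriv i.1 (ω ⟨T.1.erase i.1, by
        simp [Finset.card_erase_of_mem i.2, T.2]⟩)

noncomputable section

namespace FormalDeRham

open Finset

section Forms

variable {σ M : Type*} [Zero M]

def ofForm (j : ℕ) (ω : {T : Finset σ // #T = j} → MvPowerSeries σ M) :
    Finset σ → (σ →₀ ℕ) → M :=
  fun S m => if h : #S = j then ω ⟨S, h⟩ m else 0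

def toForm (j : ℕ) (F : Finset σ → (σ →₀ ℕ) → M) :
    {T : Finset σ // #T = j} → MvPowerSeries σ M :=
  fun T => F T.1

lemma ofForm_of_card_eq {j : ℕ} (ω : {T : Finset σ // #T = j} → MvPowerSeries σ M)
    {S : Finset σ} (h : #S = j) (m : σ →₀ ℕ) : ofForm j ω S m = ω ⟨S, h⟩ m :=
  dif_pos h

lemma ofForm_of_card_ne {j : ℕ} (ω : {T : Finset σ // #T = j} → MvPowerSeries σ M)
    {S : Finset σ} (h : #S ≠ j) : ofForm j ω S = 0 :=
  funext fun _ => dif_neg h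

lemma ofForm_injective (j : ℕ) :
    Function.Injective (ofForm j : ({T : Finset σ // #T = j} → MvPowerSeries σ M) → _) := by
  intro ω ω' h
  funext T m
  rw [← ofForm_of_card_eq ω T.2, ← ofForm_of_card_eq ω' T.2, h]

@[simp]
lemma ofForm_zero (j : ℕ) : ofForm j (0 : {T : Finset σ // #T = j} → MvPowerSeries σ M) = 0 := by
  funext S m
  simp only [ofForm]
  split <;> rfl

lemma ofForm_toForm {j : ℕ} {F : Finset σ → (σ →₀ ℕ) → M} (hF : ∀ S, #S ≠ j → F S = 0) :
    ofForm j (toForm j F) = F := by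
  funext S m
  by_cases h : #S = j
  · exact ofForm_of_card_eq _ h m
  · rw [ofForm_of_card_ne _ h, hF S h]

end Forms

section Operators

variable {σ : Type*} [LinearOrder σ]

/-- `dX_i ∧ dX_S = sign S i • dX_{insert i S}` for `i ∉ S`. -/
def sign (S : Finset σ) (i : σ) : ℤ := (-1) ^ (S.filter (· < i)).card

lemma sign_mul_self (S : Finset σ) (i : σ) : sign S i * sign S i = 1 := by
  rw [sign, ← pow_add]
  exact Even.neg_one_pow ⟨_, rfl⟩

lemma sign_erase_self (S : Finset σ) (i : σ) : sign (S.erase i) i = sign S i := by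
  rw [sign, sign, filter_erase, erase_eq_of_notMem (by simp)]

lemma sign_insert_self (S : Finset σ) (i : σ) : sign (insert i S) i = sign S i := by
  rw [sign, sign, filter_insert, if_neg (lt_irrefl i)]

lemma sign_mul_sign_erase {T : Finset σ} {i l : σ} (hi : i ∈ T) (hl : l ∉ T) :
    sign T i * sign (T.erase i) l = -(sign T l * sign (insert l T) i) := by
  have hil : i ≠ l := ne_of_mem_of_not_mem hi hl
  rw [sign, sign, sign, sign, filter_erase, filter_insert]
  rcases hil.lt_or_gt with hlt | hlt
  · have hmem : i ∈ T.filter (· < l) := mem_filter.mpr ⟨hi, hlt⟩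
    have hpos := card_pos.mpr ⟨i, hmem⟩
    rw [if_neg (asymm hlt), card_erase_of_mem hmem,
      ← Nat.sub_add_cancel hpos, Nat.add_sub_cancel, pow_succ]
    ring
  · rw [if_pos hlt, card_insert_of_notMem fun h => hl (mem_filter.mp h).1,
      erase_eq_of_notMem (s := T.filter (· < l)) fun h => asymm hlt (mem_filter.mp h).2,
      pow_succ]
    ring

variable {M : Type*} [AddCommGroup M]

/-- `F S m` is the coefficient of `X^m dX_S`; this is the exterior derivative in these
coordinates. -/
def diff (F : Finset σ → (σ →₀ ℕ) → M) : Finset σ → (σ →₀ ℕ) → M :=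
  fun T m => ∑ i ∈ T, (sign T i * (m i + 1 : ℤ)) • F (T.erase i) (m + Finsupp.single i 1)

def weight (S : Finset σ) (m : σ →₀ ℕ) : ℕ := m.degree + #S

lemma weight_erase_add_single {T : Finset σ} {i : σ} (hi : i ∈ T) (m : σ →₀ ℕ) :
    weight (T.erase i) (m + Finsupp.single i 1) = weight T m := by
  have := card_pos.mpr ⟨i, hi⟩
  rw [weight, weight, map_add, Finsupp.degree_single, card_erase_of_mem hi]
  omega

lemma diff_weight_smul {R : Type*} [Semiring R] [Module R M] (c : ℕ → R)
    (F : Finset σ → (σ →₀ ℕ) → M) (T : Finset σ) (m : σ →₀ ℕ) :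
    diff (fun S m => c (weight S m) • F S m) T m = c (weight T m) • diff F T m := by
  rw [diff, diff, smul_sum]
  refine sum_congr rfl fun i hi => ?_
  rw [weight_erase_add_single hi, smul_comm]

variable [Fintype σ]

/-- Contraction with the Euler vector field `∑ₗ Xₗ ∂/∂Xₗ`. -/
def euler (F : Finset σ → (σ →₀ ℕ) → M) : Finset σ → (σ →₀ ℕ) → M :=
  fun S m => ∑ l ∈ Sᶜ,
    sign S l • if m l = 0 then 0 else F (insert l S) (m - Finsupp.single l 1)

@[simp]
lemma euler_zero : euler (0 : Finset σ → (σ →₀ ℕ) → M) = 0 := by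
  funext S m
  simp [euler]

/-- The terms of `d ∘ ι` and of `ι ∘ d` that cancel each other. -/
def swapTerm (F : Finset σ → (σ →₀ ℕ) → M) (T : Finset σ) (m : σ →₀ ℕ) (i l : σ) : M :=
  (sign T i * sign (T.erase i) l * (m i + 1 : ℤ)) •
    if m l = 0 then 0 else F (insert l (T.erase i)) (m + Finsupp.single i 1 - Finsupp.single l 1)

lemma diff_euler_apply (F : Finset σ → (σ →₀ ℕ) → M) (T : Finset σ) (m : σ →₀ ℕ) :
    diff (euler F) T m =
      (∑ i ∈ T, (m i + 1)) • F T m + ∑ l ∈ Tᶜ, ∑ i ∈ T, swapTerm F T m i l := by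
  rw [sum_comm, sum_smul, ← sum_add_distrib]
  refine sum_congr rfl fun i hi => ?_
  have hmi : (m + Finsupp.single i 1 : σ →₀ ℕ) i ≠ 0 := by simp
  rw [euler, compl_erase, sum_insert (by simp [hi]), if_neg hmi, sign_erase_self,
    insert_erase hi, add_tsub_cancel_right, smul_add, smul_sum, smul_smul]
  congr 1
  · rw [mul_right_comm, sign_mul_self, one_mul]
    norm_cast
  · refine sum_congr rfl fun l hl => ?_
    have hli : l ≠ i := (ne_of_mem_of_not_mem hi (mem_compl.mp hl)).symm
    rw [swapTerm, Finsupp.add_apply, Finsupp.single_eq_of_ne hli, add_zero, smul_smul,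
      mul_right_comm]

lemma euler_diff_apply (F : Finset σ → (σ →₀ ℕ) → M) (T : Finset σ) (m : σ →₀ ℕ) :
    euler (diff F) T m =
      (∑ l ∈ Tᶜ, m l) • F T m - ∑ l ∈ Tᶜ, ∑ i ∈ T, swapTerm F T m i l := by
  rw [euler, sum_smul, ← sum_sub_distrib]
  refine sum_congr rfl fun l hl => ?_
  have hlT : l ∉ T := mem_compl.mp hl
  by_cases hml : m l = 0
  · simp [hml, swapTerm]
  have hle : Finsupp.single l 1 ≤ m := Finsupp.single_le_iff.mpr (Nat.one_le_iff_ne_zero.mpr hml)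
  have hl_coeff : ((m - Finsupp.single l 1 : σ →₀ ℕ) l + 1 : ℤ) = m l := by
    rw [Finsupp.tsub_apply, Finsupp.single_eq_same]; omega
  have hterm : ∀ i ∈ T,
      (sign (insert l T) i * ((m - Finsupp.single l 1 : σ →₀ ℕ) i + 1 : ℤ)) •
        F ((insert l T).erase i) (m - Finsupp.single l 1 + Finsupp.single i 1) =
      (sign (insert l T) i * (m i + 1 : ℤ)) •
      F (insert l (T.erase i)) (m + Finsupp.single i 1 - Finsupp.single l 1) := by
    intro i hi
    have hil : i ≠ l := ne_of_mem_of_not_mem hi hlT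
    rw [Finsupp.tsub_apply, Finsupp.single_eq_of_ne hil, tsub_zero, erase_insert_of_ne hil.symm,
      tsub_add_eq_add_tsub hle]
  rw [if_neg hml, diff, sum_insert hlT, sign_insert_self, hl_coeff, erase_insert hlT,
    tsub_add_cancel_of_le hle, sum_congr rfl hterm]
  simp only [swapTerm, if_neg hml]
  rw [smul_add, smul_sum, smul_smul, ← mul_assoc, sign_mul_self, one_mul, natCast_zsmul,
    sub_eq_add_neg, ← sum_neg_distrib]
  refine congrArg _ (sum_congr rfl fun i hi => ?_)
  rw [smul_smul, ← neg_smul, sign_mul_sign_erase hi hlT]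
  congr 1
  ring

theorem diff_euler_add_euler_diff (F : Finset σ → (σ →₀ ℕ) → M) (T : Finset σ)
    (m : σ →₀ ℕ) : diff (euler F) T m + euler (diff F) T m = weight T m • F T m := by
  rw [diff_euler_apply, euler_diff_apply, add_add_sub_cancel, ← add_smul, weight,
    Finsupp.degree_eq_sum, ← sum_add_sum_compl T, sum_add_distrib, sum_const, smul_eq_mul,
    mul_one, add_right_comm]

lemma euler_ofForm_of_card_ne {j : ℕ} (ω : {T : Finset σ // #T = j} → MvPowerSeries σ M)
    {S : Finset σ} (h : #S + 1 ≠ j) : euler (ofForm j ω) S = 0 := by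
  funext m
  refine sum_eq_zero fun l hl => ?_
  rw [ofForm_of_card_ne ω (by rwa [card_insert_of_notMem (mem_compl.mp hl)])]
  simp

end Operators

lemma ofForm_formD {n : ℕ} {B : Type*} [CommRing B] (j : ℕ)
    (ω : {T : Finset (Fin n) // #T = j} → MvPowerSeries (Fin n) B) :
    ofForm (j + 1) (formD j ω) = diff (ofForm j ω) := by
  funext T m
  by_cases hT : #T = j + 1
  · rw [ofForm_of_card_eq _ hT, diff, ← sum_attach T]
    change MvPowerSeries.coeff m (formD j ω ⟨T, hT⟩) = _
    rw [formD, map_sum]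
    refine sum_congr rfl fun i _ => ?_
    have hcard : #(T.erase i) = j := by rw [card_erase_of_mem i.2, hT, Nat.add_sub_cancel]
    rw [map_zsmul, ofForm_of_card_eq ω hcard, sign, mul_smul]
    congr 1
    rw [← Nat.cast_succ, natCast_zsmul]
    rfl
  · rw [ofForm_of_card_ne _ hT, diff]
    refine (sum_eq_zero fun i hi => ?_).symm
    have hcard : #(T.erase i) ≠ j := by
      have := card_pos.mpr ⟨i, hi⟩
      rw [card_erase_of_mem hi]
      omega
    rw [ofForm_of_card_ne ω hcard, Pi.zero_apply, smul_zero]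

theorem exists_formD_eq_of_formD_eq_zero {n : ℕ} {B : Type*} [CommRing B] [Module ℚ B]
    {j : ℕ} {ω : {T : Finset (Fin n) // #T = j + 1} → MvPowerSeries (Fin n) B}
    (hω : formD (j + 1) ω = 0) : ∃ η, formD j η = ω := by
  set F := ofForm (j + 1) ω with hF
  have hclosed : diff F = 0 := by rw [← ofForm_formD, hω, ofForm_zero]
  have hsupp : ∀ S : Finset (Fin n), #S ≠ j →
      (fun m => ((weight S m : ℚ)⁻¹ • euler F S m)) = 0 := fun S hS => by
    funext m
    rw [euler_ofForm_of_card_ne ω (by omega), Pi.zero_apply, smul_zero]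
  refine ⟨toForm j fun S m => (weight S m : ℚ)⁻¹ • euler F S m, ofForm_injective (j + 1) ?_⟩
  rw [ofForm_formD, ofForm_toForm hsupp]
  funext T m
  have hcartan := diff_euler_add_euler_diff F T m
  rw [hclosed, euler_zero, Pi.zero_apply, Pi.zero_apply, add_zero] at hcartan
  rw [diff_weight_smul (fun k => (k : ℚ)⁻¹), hcartan]
  by_cases hT : #T = j + 1
  · have hw : (weight T m : ℚ) ≠ 0 := Nat.cast_ne_zero.mpr (by simp [weight, hT])
    rw [← Nat.cast_smul_eq_nsmul ℚ, inv_smul_smul₀ hw]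
  · rw [hF, ofForm_of_card_ne ω hT, Pi.zero_apply, smul_zero, smul_zero]

lemma formD_zero_C {n : ℕ} {B : Type*} [CommRing B] (b : B) :
    formD 0 (fun _ => (MvPowerSeries.C b : MvPowerSeries (Fin n) B)) = 0 := by
  refine ofForm_injective 1 ?_
  rw [ofForm_formD, ofForm_zero]
  funext T m
  refine sum_eq_zero fun i _ => ?_
  have hcoeff : MvPowerSeries.coeff (m + Finsupp.single i 1) (MvPowerSeries.C b) = 0 := by
    rw [MvPowerSeries.coeff_C, if_neg (by simp)]
  rw [ofForm]
  split_ifs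
  · exact (congrArg _ hcoeff).trans (smul_zero _)
  · rw [smul_zero]

theorem eq_C_of_formD_zero_eq_zero {n : ℕ} {B : Type*} [CommRing B] [Module ℚ B]
    {f : MvPowerSeries (Fin n) B} (hf : formD 0 (fun _ => f) = 0) :
    f = MvPowerSeries.C (MvPowerSeries.coeff 0 f) := by
  ext m
  rw [MvPowerSeries.coeff_C]
  split_ifs with hm
  · rw [hm]
  have hcartan := diff_euler_add_euler_diff (ofForm 0 fun _ => f) ∅ m
  rw [← ofForm_formD, hf, ofForm_zero, euler_zero, diff, sum_empty, Pi.zero_apply,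
    Pi.zero_apply, add_zero, ofForm_of_card_eq _ card_empty, weight, card_empty,
    add_zero] at hcartan
  have hw : (m.degree : ℚ) ≠ 0 := by
    exact_mod_cast (Finsupp.degree_eq_zero_iff m).not.mpr hm
  rw [← inv_smul_smul₀ hw (MvPowerSeries.coeff m f), Nat.cast_smul_eq_nsmul]
  exact (congrArg _ hcartan.symm).trans (smul_zero _)

end FormalDeRham

end

/-- Formal Poincaré lemma: for a commutative `ℚ`-algebra `B`, the formal de Rham complex
`0 → B → B[[X_1, …, X_n]] → Ω¹ → ⋯ → Ωⁿ → 0` is exact: the kernel of `d` in degree `0`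
consists exactly of the constants from `B`, and every closed form of positive degree is
exact. -/
theorem stmt_15 {n : ℕ} {B : Type*} [CommRing B] [Algebra ℚ B] :
    (∀ f : MvPowerSeries (Fin n) B,
      formD 0 (fun _ => f) = 0 ↔ ∃ b : B, f = (MvPowerSeries.C b : MvPowerSeries (Fin n) B)) ∧
    (∀ (j : ℕ) (ω : {T : Finset (Fin n) // T.card = j + 1} → MvPowerSeries (Fin n) B),
      formD (j + 1) ω = 0 →
      ∃ η : {T : Finset (Fin n) // T.card = j} → MvPowerSeries (Fin n) B,
        formD j η = ω) :=
  ⟨fun _ => ⟨fun hf => ⟨_, FormalDeRham.eq_C_of_formD_zero_eq_zero hf⟩,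
      fun ⟨b, hb⟩ => hb ▸ FormalDeRham.formD_zero_C b⟩,
    fun _ _ => FormalDeRham.exists_formD_eq_of_formD_eq_zero⟩
end

section
/- Let R be a commutative ℚ-algebra and γ a ring automorphism of R. Extend γ to a ring automorphism γ̃ of the polynomial ring R[W] with γ̃(W) = W + 1. For j ≥ 0 let binom(W,j) := W(W−1)⋯(W−j+1)/j! ∈ R[W], so that every f ∈ R[W] is uniquely of the form f = Σ_j c_j binom(W,j) with c_j ∈ R almost all zero. Then γ̃(f) = f if and only if c_{j+1} = γ^{−1}(c_j) − c_j for all j ≥ 0; equivalently, c_j = (γ^{−1} − 1)^j (c_0) for all j ≥ 0. -/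
open Polynomial

/-- The binomial polynomial `binom(W, j) = W (W-1) ⋯ (W-j+1) / j!` over a `ℚ`-algebra. -/
noncomputable def binomPoly (R : Type*) [CommRing R] [Algebra ℚ R] (j : ℕ) : R[X] :=
  algebraMap ℚ R ((j.factorial : ℚ))⁻¹ • ∏ k ∈ Finset.range j, (X - C (k : R))

section aux

variable {R : Type*} [CommRing R] [Algebra ℚ R]

lemma prod_eq_descPochhammer (j : ℕ) :
    ∏ k ∈ Finset.range j, (X - C ((k : R))) = descPochhammer R j := by
  induction j with
  | zero => simp [descPochhammer_zero]
  | succ n ih =>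
    rw [Finset.prod_range_succ, ih, descPochhammer_succ_right, map_natCast C]

lemma binomPoly_eval_nat (j m : ℕ) :
    eval ((m : R)) (binomPoly R j) = (m.choose j : R) := by
  rw [binomPoly, prod_eq_descPochhammer, smul_eq_C_mul, eval_mul, eval_C,
    descPochhammer_eval_eq_descFactorial, Nat.descFactorial_eq_factorial_mul_choose,
    Nat.cast_mul, ← mul_assoc]
  have : (j.factorial : R) = algebraMap ℚ R (j.factorial : ℚ) := by
    simp
  rw [this, ← map_mul, inv_mul_cancel₀ (by exact_mod_cast j.factorial_ne_zero), map_one, one_mul]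

lemma binom_coeffs_unique (a : ℕ → R) (N : ℕ)
    (h : ∑ j ∈ Finset.range N, a j • binomPoly R j = 0) :
    ∀ m, m < N → a m = 0 := by
  intro m
  induction m using Nat.strong_induction_on with
  | _ m ih =>
    intro hm
    have := congrArg (eval ((m : R))) h
    rw [eval_finset_sum, eval_zero] at this
    simp only [smul_eq_C_mul, eval_mul, eval_C, binomPoly_eval_nat] at this
    rw [Finset.sum_eq_single m (fun j _ hj => by
        rcases lt_or_gt_of_ne hj with h1 | h1
        · rw [ih j h1 (h1.trans hm), zero_mul]
        · rw [Nat.choose_eq_zero_of_lt h1, Nat.cast_zero, mul_zero])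
      (fun hmem => absurd (Finset.mem_range.mpr hm) hmem)] at this
    simpa using this

variable (γ : R ≃+* R)

lemma eval₂_binomPoly (j : ℕ) :
    Polynomial.eval₂ (Polynomial.C.comp (γ : R →+* R)) (X + 1) (binomPoly R j) =
      algebraMap ℚ R ((j.factorial : ℚ))⁻¹ •
        ∏ k ∈ Finset.range j, (X + 1 - C ((k : R))) := by
  rw [binomPoly, smul_eq_C_mul, eval₂_mul, eval₂_C, eval₂_finset_prod, smul_eq_C_mul]
  congr 1
  · rw [RingHom.coe_comp, Function.comp_apply, RingHom.map_rat_algebraMap]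
  · refine Finset.prod_congr rfl fun k _ => ?_
    rw [eval₂_sub, eval₂_X, eval₂_C]
    simp

lemma eval₂_binomPoly_zero :
    Polynomial.eval₂ (Polynomial.C.comp (γ : R →+* R)) (X + 1) (binomPoly R 0) =
      binomPoly R 0 := by
  rw [eval₂_binomPoly, binomPoly]
  simp

lemma eval₂_binomPoly_succ (j : ℕ) :
    Polynomial.eval₂ (Polynomial.C.comp (γ : R →+* R)) (X + 1) (binomPoly R (j + 1)) =
      binomPoly R (j + 1) + binomPoly R j := by
  rw [eval₂_binomPoly]
  have hprod : ∏ k ∈ Finset.range (j + 1), (X + 1 - C ((k : R))) =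
      (X + 1) * ∏ k ∈ Finset.range j, (X - C ((k : R))) := by
    rw [Finset.prod_range_succ']
    have : ∀ k ∈ Finset.range j, (X + 1 - C (((k + 1 : ℕ) : R))) = X - C ((k : R)) := by
      intro k _
      rw [Nat.cast_succ, map_add, map_one]
      ring
    rw [Finset.prod_congr rfl this]
    simp [mul_comm]
  rw [hprod]
  have hX : (X + 1 : R[X]) = (X - C ((j : R))) + C (((j : ℕ) : R) + 1) := by
    rw [map_add, map_one]; ring
  rw [hX, add_mul, smul_add]
  congr 1
  · rw [binomPoly, Finset.prod_range_succ, mul_comm (X - C ((j : R)))]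
  · rw [binomPoly, smul_eq_C_mul, smul_eq_C_mul, ← mul_assoc, ← C_mul]
    congr 2
    have : (((j : ℕ) : R) + 1) = algebraMap ℚ R ((j : ℚ) + 1) := by
      simp
    rw [this, ← map_mul]
    congr 1
    rw [Nat.factorial_succ]
    push_cast
    field_simp

end aux

/-- Let `R` be a commutative `ℚ`-algebra and `γ` a ring automorphism of `R`, extended to
`γ̃` on `R[W]` by `γ̃(W) = W + 1` (i.e. `γ̃ = eval₂ (C ∘ γ) (W + 1)`).  Writing
`f = ∑_j c_j binom(W, j)` (finitely many nonzero `c_j`), one has `γ̃ f = f` iff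
`c_{j+1} = γ⁻¹(c_j) - c_j` for all `j`, iff `c_j = (γ⁻¹ - 1)^j (c_0)` for all `j`. -/
theorem stmt_16 {R : Type*} [CommRing R] [Algebra ℚ R] (γ : R ≃+* R)
    (f : R[X]) (c : ℕ → R) (N : ℕ) (hcN : ∀ j, N ≤ j → c j = 0)
    (hf : f = ∑ j ∈ Finset.range N, c j • binomPoly R j) :
    (Polynomial.eval₂ (Polynomial.C.comp (γ : R →+* R)) (X + 1) f = f ↔
      ∀ j : ℕ, c (j + 1) = γ.symm (c j) - c j) ∧
    ((∀ j : ℕ, c (j + 1) = γ.symm (c j) - c j) ↔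
      ∀ j : ℕ, c j = (fun x => γ.symm x - x)^[j] (c 0)) := by
  constructor
  · -- first iff
    -- compute γ̃ f
    set E : ℕ → R[X] := fun j =>
      Polynomial.eval₂ (Polynomial.C.comp (γ : R →+* R)) (X + 1) (binomPoly R j) with hE
    set T : ℕ → R[X] := fun j => Nat.rec (0 : R[X]) (fun n _ => binomPoly R n) j with hT
    have hTE : ∀ j, E j = binomPoly R j + T j := by
      intro j
      cases j with
      | zero => simp [hE, hT, eval₂_binomPoly_zero γ]
      | succ n => simp [hE, hT, eval₂_binomPoly_succ γ n]
    have hgf : Polynomial.eval₂ (Polynomial.C.comp (γ : R →+* R)) (X + 1) f =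
        ∑ j ∈ Finset.range N, γ (c j) • E j := by
      rw [hf, eval₂_finset_sum]
      refine Finset.sum_congr rfl fun j _ => ?_
      rw [smul_eq_C_mul, eval₂_mul, eval₂_C, smul_eq_C_mul]
      rfl
    have hshift : ∑ j ∈ Finset.range N, γ (c j) • T j =
        ∑ j ∈ Finset.range N, γ (c (j + 1)) • binomPoly R j := by
      cases N with
      | zero => simp
      | succ M =>
        rw [Finset.sum_range_succ' (fun j => γ (c j) • T j) M,
          Finset.sum_range_succ (fun j => γ (c (j + 1)) • binomPoly R j) M]
        have : c (M + 1) = 0 := hcN _ le_rfl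
        simp [hT, this]
    have hgf2 : Polynomial.eval₂ (Polynomial.C.comp (γ : R →+* R)) (X + 1) f =
        ∑ j ∈ Finset.range N, (γ (c j) + γ (c (j + 1))) • binomPoly R j := by
      rw [hgf]
      simp only [hTE, smul_add, Finset.sum_add_distrib, hshift, add_smul]
    constructor
    · intro h
      -- get coefficient relations
      have hzero : ∑ j ∈ Finset.range N, (γ (c j) + γ (c (j + 1)) - c j) • binomPoly R j
          = 0 := by
        simp only [sub_smul, Finset.sum_sub_distrib]
        rw [← hgf2, h, hf, sub_self]
      have key : ∀ m, m < N → γ (c m) + γ (c (m + 1)) - c m = 0 :=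
        binom_coeffs_unique _ N hzero
      intro j
      have hj : γ (c j) + γ (c (j + 1)) = c j := by
        by_cases hjN : j < N
        · have := key j hjN
          linear_combination this
        · push_neg at hjN
          rw [hcN j hjN, hcN (j + 1) (le_trans hjN (Nat.le_succ j))]
          simp
      have : γ (c (j + 1)) = c j - γ (c j) := by linear_combination hj
      calc c (j + 1) = γ.symm (γ (c (j + 1))) := (γ.symm_apply_apply _).symm
        _ = γ.symm (c j - γ (c j)) := by rw [this]
        _ = γ.symm (c j) - c j := by rw [map_sub, γ.symm_apply_apply]
    · intro h
      rw [hgf2, hf]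
      refine Finset.sum_congr rfl fun j _ => ?_
      have : γ (c (j + 1)) = c j - γ (c j) := by
        rw [h j, map_sub, γ.apply_symm_apply]
      rw [this]
      ring_nf
  · -- second iff
    constructor
    · intro h j
      induction j with
      | zero => simp
      | succ n ih =>
        rw [Function.iterate_succ_apply', ← ih, h n]
    · intro h j
      rw [h (j + 1), Function.iterate_succ_apply', ← h j]
end
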